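/- The kernel of an indiscernible sequence (a_i)_{i∈I} is the largest subset of acl^eq((a_i)_{i∈I}) over which the sequence is indiscernible. -/

import Mathlib

/-!
Maximality: if the sequence is indiscernible over `x ∈ acl^eq(a_{I₀})` with `I₀` finite, move
`I₀` to a block `I₁ ≫ I₀` of the same order type. The algebraic formula still holds of `x` over
`a_{I₁}`, and it still has finitely many classes, since "at least `N` classes" is a formula
without `x`; so `x ∈ acl^eq(a_{I₀}) ∩ acl^eq(a_{I₁})`.

Indiscernibility over the kernel comes from a pigeonhole argument. Let `W` be a finite union of
classes defined over a block `a_w`, and for a block `c` let `A(c)` be the union of the classes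
contained in `ψ(M; a_c)`. Along an infinite chain of blocks `c₀, c₁, …` in the same position
relative to `w`, the sets `W ∩ A(cₜ)` are among the finitely many unions of classes of `W`, so
two of them agree. As `W ∩ A(c) = W ∩ A(c')` is a formula in `a_w a_c a_c'`, indiscernibility
gives it for every pair of blocks in that position. With `W` given by the left witness of
`x ∈ acl^eq(a_{I₀}) ∩ acl^eq(a_{I₁})`, this shows the right witness survives when `I₁` moves
anywhere above `I₀`. With `W` given by these right witnesses for a tuple `e` of kernel elements,
placed far to the right, and a chain running to the left, it gives `ψ(a_i; e) ↔ ψ(a_j; e)`.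
-/

open FirstOrder FirstOrder.Language Set

universe u v w

namespace Equationality

variable {L : FirstOrder.Language.{u, v}}

section Struc
variable {M : Type w} [L.Structure M]

/-- The instance of the formula `φ(x; y)` at the parameter tuple `b`. -/
def instSet {α β : Type*} (φ : L.Formula (α ⊕ β)) (b : β → M) : Set (α → M) :=
  {a | φ.Realize (Sum.elim a b)}

/-- A sequence of `γ`-tuples indexed by a linear order is indiscernible if any two strictly
increasing finite subsequences satisfy the same formulas. -/
def IsIndiscernible {I : Type*} [LinearOrder I] {γ : Type*} (a : I → γ → M) : Prop :=
  ∀ (n : ℕ) (i j : Fin n → I), StrictMono i → StrictMono j →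
    ∀ φ : L.Formula (Fin n × γ),
      φ.Realize (fun p => a (i p.1) p.2) ↔ φ.Realize (fun p => a (j p.1) p.2)

/-- The complete type of a tuple over `∅`, as the set of formulas it realizes. -/
def typeOf {γ : Type*} (a : γ → M) : Set (L.Formula γ) := {φ | φ.Realize a}

end Struc

variable (T : L.Theory)

/-- `φ(x; y)` is an equation for `T`: in every model of `T`, the family of finite
intersections of instances of `φ` has the descending chain condition. -/
def IsEquation {α β : Type*} (φ : L.Formula (α ⊕ β)) : Prop :=
  ∀ (M : Theory.ModelType.{u, v, max u v} T) (B : ℕ → Finset (β → M)),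
    (Antitone fun n => ⋂ b ∈ B n, instSet φ b) →
    ∃ N, ∀ n, N ≤ n → (⋂ b ∈ B n, instSet φ b) = ⋂ b ∈ B N, instSet φ b

/-- A complete type over `∅` (in the variables `γ`), presented as the set of formulas
realized by some tuple in some model of `T`. -/
def IsRealizedType {γ : Type*} (p : Set (L.Formula γ)) : Prop :=
  ∃ (M : Theory.ModelType.{u, v, max u v} T) (a : γ → M), typeOf a = p

/-- `p ⟶ q`: there are a model of `T`, a tuple `b` and an indiscernible sequence `(aᵢ)`
with `aᵢ ⊨ p(x, b)` for `i > 0` and `a₀ ⊨ q(x, b)`. -/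
def Pf {α β : Type*} (p q : Set (L.Formula (α ⊕ β))) : Prop :=
  ∃ (M : Theory.ModelType.{u, v, max u v} T) (b : β → M) (a : ℕ → α → M),
    IsIndiscernible (L := L) a ∧ (∀ i : ℕ, 0 < i → typeOf (Sum.elim (a i) b) = p) ∧
      typeOf (Sum.elim (a 0) b) = q

section Imag

variable {M : Type w} [L.Structure M]

/-- `E` defines an equivalence relation on `n`-tuples of `M`. -/
def IsEqRelFormula (n : ℕ) (E : L.Formula (Fin n ⊕ Fin n)) (M : Type w) [L.Structure M] :
    Prop :=
  (∀ a : Fin n → M, E.Realize (Sum.elim a a)) ∧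
  (∀ a b : Fin n → M, E.Realize (Sum.elim a b) → E.Realize (Sum.elim b a)) ∧
  (∀ a b c : Fin n → M, E.Realize (Sum.elim a b) → E.Realize (Sum.elim b c) →
    E.Realize (Sum.elim a c))

/-- An imaginary element of `M` (an element of `M^eq`): a class of a `∅`-definable
equivalence relation on finite tuples. -/
structure Im (L : FirstOrder.Language.{u, v}) (M : Type w) [L.Structure M] where
  n : ℕ
  E : L.Formula (Fin n ⊕ Fin n)
  isEqRel : IsEqRelFormula n E M
  cls : Set (Fin n → M)
  isCls : ∃ a : Fin n → M, cls = {b | E.Realize (Sum.elim a b)}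

/-- The variable sort corresponding to a finite tuple `e` of imaginaries. -/
abbrev ImVars {k : ℕ} (e : Fin k → Im L M) : Type _ := Σ r : Fin k, Fin ((e r).n)

/-- A choice of representatives for a tuple of imaginaries. -/
def IsRep {k : ℕ} (e : Fin k → Im L M) (c : ∀ r : Fin k, Fin ((e r).n) → M) : Prop :=
  ∀ r, c r ∈ (e r).cls

/-- A formula with an imaginary-parameter block is invariant if its truth value does not
depend on the choice of representatives. -/
def ImInvariant {γ : Type*} {k : ℕ} (e : Fin k → Im L M)
    (φ : L.Formula (γ ⊕ ImVars e)) : Prop :=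
  ∀ (d : γ → M) (c c' : ∀ r, Fin ((e r).n) → M), IsRep e c → IsRep e c' →
    (φ.Realize (Sum.elim d fun q => c q.1 q.2) ↔ φ.Realize (Sum.elim d fun q => c' q.1 q.2))

/-- The complete type of a real tuple `d` over a tuple of imaginaries `e` : the set of
invariant formulas over `e` satisfied by `d`. -/
def typeOverIm {γ : Type*} {k : ℕ} (e : Fin k → Im L M) (d : γ → M) :
    Set (L.Formula (γ ⊕ ImVars e)) :=
  {φ | ImInvariant (L := L) e φ ∧
    ∀ c : ∀ r, Fin ((e r).n) → M, IsRep e c → φ.Realize (Sum.elim d fun q => c q.1 q.2)}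

/-- The imaginary `e` lies in `acl^eq(X)`, for a set `X` of real elements: some `X`-definable
`E`-invariant formula holds of `e` and of only finitely many `E`-classes. -/
def InAclEq (X : Set M) (e : Im L M) : Prop :=
  ∃ (m : ℕ) (c : Fin m → M) (φ : L.Formula (Fin e.n ⊕ Fin m)),
    (∀ t, c t ∈ X) ∧
    (∀ a b : Fin e.n → M, e.E.Realize (Sum.elim a b) →
      (φ.Realize (Sum.elim a c) ↔ φ.Realize (Sum.elim b c))) ∧
    (∀ a ∈ e.cls, φ.Realize (Sum.elim a c)) ∧
    {D : Set (Fin e.n → M) | (∃ a : Fin e.n → M, D = {b | e.E.Realize (Sum.elim a b)}) ∧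
      ∀ a ∈ D, φ.Realize (Sum.elim a c)}.Finite

/-- Indiscernibility of a sequence over an imaginary tuple `e`. -/
def IsIndiscernibleOverIm {k : ℕ} (e : Fin k → Im L M) {I : Type*} [LinearOrder I]
    {γ : Type*} (a : I → γ → M) : Prop :=
  ∀ (n : ℕ) (i j : Fin n → I), StrictMono i → StrictMono j →
    ∀ φ : L.Formula ((Fin n × γ) ⊕ ImVars e), ImInvariant (L := L) e φ →
      ∀ c : ∀ r, Fin ((e r).n) → M, IsRep e c →
        (φ.Realize (Sum.elim (fun p => a (i p.1) p.2) fun q => c q.1 q.2) ↔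
          φ.Realize (Sum.elim (fun p => a (j p.1) p.2) fun q => c q.1 q.2))

/-- The formula `φ(x, d)` divides over the imaginary tuple `e`. -/
def DividesIm {α γ : Type*} {k : ℕ} (φ : L.Formula (α ⊕ γ)) (d : γ → M)
    (e : Fin k → Im L M) : Prop :=
  ∃ (kk : ℕ) (d' : ℕ → γ → M), 0 < kk ∧ d' 0 = d ∧
    IsIndiscernibleOverIm (L := L) e d' ∧
    ∀ s : Finset ℕ, s.card = kk → ¬ ∃ a : α → M, ∀ i ∈ s, φ.Realize (Sum.elim a (d' i))

/-- `a` is forking-independent from `B` over the imaginary tuple `e`. -/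
def IndepOverIm {α : Type*} {k : ℕ} (a : α → M) (B : Set M) (e : Fin k → Im L M) : Prop :=
  ∀ (m : ℕ) (c : Fin m → M), (∀ t, c t ∈ B) →
    ∀ φ : L.Formula (α ⊕ (Fin m ⊕ ImVars e)),
      (∀ (x : α → M) (c0 : Fin m → M) (r1 r2 : ∀ r, Fin ((e r).n) → M),
        IsRep e r1 → IsRep e r2 →
        (φ.Realize (Sum.elim x (Sum.elim c0 fun q => r1 q.1 q.2)) ↔
          φ.Realize (Sum.elim x (Sum.elim c0 fun q => r2 q.1 q.2)))) →
      ∀ rep : ∀ r, Fin ((e r).n) → M, IsRep e rep →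
        φ.Realize (Sum.elim a (Sum.elim c fun q => rep q.1 q.2)) →
        ¬ DividesIm (L := L) φ (Sum.elim c fun q => rep q.1 q.2) e

/-- `d` and `d'` have the same type over `B ∪ e`. -/
def SameTypeOverIm {γ : Type*} {k : ℕ} (d d' : γ → M) (B : Set M)
    (e : Fin k → Im L M) : Prop :=
  ∀ (m : ℕ) (c : Fin m → M), (∀ t, c t ∈ B) →
    ∀ φ : L.Formula (γ ⊕ (Fin m ⊕ ImVars e)),
      (∀ (x : γ → M) (c0 : Fin m → M) (r1 r2 : ∀ r, Fin ((e r).n) → M),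
        IsRep e r1 → IsRep e r2 →
        (φ.Realize (Sum.elim x (Sum.elim c0 fun q => r1 q.1 q.2)) ↔
          φ.Realize (Sum.elim x (Sum.elim c0 fun q => r2 q.1 q.2)))) →
      ∀ rep : ∀ r, Fin ((e r).n) → M, IsRep e rep →
        (φ.Realize (Sum.elim d (Sum.elim c fun q => rep q.1 q.2)) ↔
          φ.Realize (Sum.elim d' (Sum.elim c fun q => rep q.1 q.2)))

/-- A type over the imaginary tuple `e` is stationary: realizations independent from a set `B`
over `e` all have the same type over `B ∪ e`. -/
def IsStationaryOverIm {γ : Type*} {k : ℕ} (e : Fin k → Im L M)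
    (p : Set (L.Formula (γ ⊕ ImVars e))) : Prop :=
  ∀ d d' : γ → M, typeOverIm (L := L) e d = p → typeOverIm (L := L) e d' = p →
    ∀ B : Set M, IndepOverIm (L := L) d B e → IndepOverIm (L := L) d' B e →
      SameTypeOverIm (L := L) d d' B e

/-- `p ⟶ q` for types over the imaginary tuple `e`, with variable partition `(α; β)`. -/
def PfOverIm {α β : Type*} {k : ℕ} (e : Fin k → Im L M)
    (p q : Set (L.Formula ((α ⊕ β) ⊕ ImVars e))) : Prop :=
  ∃ (b : β → M) (a : ℕ → α → M), IsIndiscernible (L := L) a ∧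
    (∀ i : ℕ, 0 < i → typeOverIm (L := L) e (Sum.elim (a i) b) = p) ∧
    typeOverIm (L := L) e (Sum.elim (a 0) b) = q

end Imag
section ImSet

variable {M : Type w} [L.Structure M]

/-- Indiscernibility of a sequence over a set `K` of imaginaries. -/
def IsIndiscernibleOverImSet (K : Set (Im L M)) {I : Type*} [LinearOrder I] {γ : Type*}
    (a : I → γ → M) : Prop :=
  ∀ (k : ℕ) (e : Fin k → Im L M), (∀ r, e r ∈ K) → IsIndiscernibleOverIm (L := L) e a

/-- The kernel of an indiscernible sequence: the union over all cuts `I₀ ≪ I₁` of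
`acl^eq(a_{I₀}) ∩ acl^eq(a_{I₁})`. -/
def kernel {I : Type*} [LinearOrder I] {γ : Type*} (a : I → γ → M) : Set (Im L M) :=
  {x : Im L M | ∃ I₀ I₁ : Set I, (∀ i ∈ I₀, ∀ j ∈ I₁, i < j) ∧
    InAclEq (L := L) (⋃ i ∈ I₀, range (a i)) x ∧
    InAclEq (L := L) (⋃ i ∈ I₁, range (a i)) x}

end ImSet

section OrderType

variable {I : Type*} [LinearOrder I] {K K' : Type*}

def SameOrderType (u u' : K → I) : Prop := ∀ k k', u k < u k' ↔ u' k < u' k'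

namespace SameOrderType

variable {u u' u'' : K → I}

theorem refl (u : K → I) : SameOrderType u u := fun _ _ => Iff.rfl

theorem symm (h : SameOrderType u u') : SameOrderType u' u := fun k k' => (h k k').symm

theorem trans (h : SameOrderType u u') (h' : SameOrderType u' u'') : SameOrderType u u'' :=
  fun k k' => (h k k').trans (h' k k')

theorem eq_iff (h : SameOrderType u u') {k k' : K} : u k = u k' ↔ u' k = u' k' := by
  simp only [le_antisymm_iff, ← not_lt, h k k', h k' k]

theorem of_strictMono [LinearOrder K] (hu : StrictMono u) (hu' : StrictMono u') :
    SameOrderType u u' :=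
  fun _ _ => hu.lt_iff_lt.trans hu'.lt_iff_lt.symm

variable {f f' : K → I} {g g' : K' → I}

theorem sumElim (hf : SameOrderType f f') (hg : SameOrderType g g')
    (hfg : ∀ k k', f k < g k' ↔ f' k < g' k') (hgf : ∀ k k', g k' < f k ↔ g' k' < f' k) :
    SameOrderType (Sum.elim f g) (Sum.elim f' g') := by
  rintro (k | k) (k' | k')
  exacts [hf k k', hfg k k', hgf k' k, hg k k']

theorem sumElim_of_lt (hf : SameOrderType f f') (hg : SameOrderType g g')
    (h : ∀ k k', f k < g k') (h' : ∀ k k', f' k < g' k') :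
    SameOrderType (Sum.elim f g) (Sum.elim f' g') :=
  hf.sumElim hg (fun k k' => iff_of_true (h k k') (h' k k'))
    (fun k k' => iff_of_false (h k k').asymm (h' k k').asymm)

theorem sumElim_of_gt (hf : SameOrderType f f') (hg : SameOrderType g g')
    (h : ∀ k k', g k' < f k) (h' : ∀ k k', g' k' < f' k) :
    SameOrderType (Sum.elim f g) (Sum.elim f' g') :=
  hf.sumElim hg (fun k k' => iff_of_false (h k k').asymm (h' k k').asymm)
    (fun k k' => iff_of_true (h k k') (h' k k'))

end SameOrderType

theorem exists_strictMono_comp_eq [Finite K] (u : K → I) :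
    ∃ (l : ℕ) (w : Fin l → I) (π : K → Fin l),
      StrictMono w ∧ Function.Surjective π ∧ u = w ∘ π := by
  classical
  have := Fintype.ofFinite K
  set S := Finset.univ.image u
  have hS : ∀ k, u k ∈ S := fun k => Finset.mem_image_of_mem u (Finset.mem_univ k)
  refine ⟨S.card, S.orderEmbOfFin rfl, fun k => (S.orderIsoOfFin rfl).symm ⟨u k, hS k⟩,
    (S.orderEmbOfFin rfl).strictMono, fun p => ?_, funext fun k => ?_⟩
  · obtain ⟨k, -, hk⟩ := Finset.mem_image.1 (S.orderIsoOfFin rfl p).2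
    exact ⟨k, by simp only [hk, Subtype.coe_eta, OrderIso.symm_apply_apply]⟩
  · simp [← Finset.coe_orderIsoOfFin_apply]

theorem exists_gt_forall_lt [NoMaxOrder I] [Finite K] (u : K → I) (z : I) :
    ∃ b, z < b ∧ ∀ k, u k < b := by
  have : Nonempty I := ⟨z⟩
  obtain ⟨b, hb⟩ := (Set.finite_range u).bddAbove
  obtain ⟨c, hc⟩ := exists_gt (max z b)
  exact ⟨c, (le_max_left z b).trans_lt hc,
    fun k => ((hb ⟨k, rfl⟩).trans (le_max_right z b)).trans_lt hc⟩

theorem exists_sameOrderType_forall_gt [NoMaxOrder I] [Finite K] (u : K → I) (z : I) :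
    ∃ u' : K → I, SameOrderType u u' ∧ ∀ k, z < u' k := by
  obtain ⟨l, w, π, hw, -, rfl⟩ := exists_strictMono_comp_eq u
  obtain ⟨f, hf, hf0⟩ := Nat.exists_strictMono' z
  refine ⟨fun k => f ((π k : ℕ) + 1), fun k k' => ?_, fun k => hf0 ▸ hf (Nat.succ_pos _)⟩
  simp only [Function.comp_apply, hw.lt_iff_lt, hf.lt_iff_lt, Fin.lt_def, Nat.add_lt_add_iff_right]

theorem exists_chain_gt [Nonempty I] [NoMaxOrder I] [Finite K] [Finite K']
    (u : K → I) (v : K' → I) :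
    ∃ ch : ℕ → K → I, (∀ s, SameOrderType u (ch s)) ∧ (∀ s k k', v k' < ch s k) ∧
      ∀ s t, s < t → ∀ k k', ch s k < ch t k' := by
  obtain ⟨z, -, hvz⟩ := exists_gt_forall_lt v (Classical.arbitrary I)
  choose F hF hFz using exists_sameOrderType_forall_gt u
  choose B hzB hFB using fun z => exists_gt_forall_lt (F z) z
  have hB : StrictMono fun s => B^[s] z :=
    strictMono_nat_of_lt_succ fun s => by
      simpa only [Function.iterate_succ_apply'] using hzB (B^[s] z)
  refine ⟨fun s => F (B^[s] z), fun s => hF _,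
    fun s k k' => (hvz k').trans_le ((hB.monotone s.zero_le).trans (hFz _ k).le), ?_⟩
  intro s t hst k k'
  calc F (B^[s] z) k < B^[s + 1] z := by
        rw [Function.iterate_succ_apply']; exact hFB _ k
    _ ≤ B^[t] z := hB.monotone hst
    _ < F (B^[t] z) k' := hFz _ k'

theorem exists_chain_lt [Nonempty I] [NoMinOrder I] [Finite K] [Finite K']
    (u : K → I) (v : K' → I) :
    ∃ ch : ℕ → K → I, (∀ s, SameOrderType u (ch s)) ∧ (∀ s k k', ch s k < v k') ∧
      ∀ s t, s < t → ∀ k k', ch t k < ch s k' := by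
  obtain ⟨ch, hch, hv, hst⟩ := exists_chain_gt (I := Iᵒᵈ) (OrderDual.toDual ∘ u)
    (OrderDual.toDual ∘ v)
  exact ⟨fun s k => OrderDual.ofDual (ch s k), fun s k k' => hch s k' k,
    fun s k k' => hv s k k', fun s t h k k' => hst s t h k' k⟩

end OrderType

theorem IsIndiscernible.realize_iff_of_sameOrderType {M : Type w} [L.Structure M]
    {I : Type*} [LinearOrder I] {γ : Type*} {a : I → γ → M} (ha : IsIndiscernible (L := L) a)
    {K : Type*} [Finite K] {u u' : K → I} (h : SameOrderType u u') (φ : L.Formula (K × γ)) :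
    φ.Realize (Function.uncurry (a ∘ u)) ↔ φ.Realize (Function.uncurry (a ∘ u')) := by
  obtain ⟨l, w, π, hw, hπ, rfl⟩ := exists_strictMono_comp_eq u
  -- `w'` lists the range of `u'` in the order in which `w` lists that of `u`
  set w' : Fin l → I := fun p => u' (Function.surjInv hπ p)
  have hu' : u' = w' ∘ π := funext fun k =>
    (h.eq_iff (k := k) (k' := Function.surjInv hπ (π k))).1
      (by simp only [Function.comp_apply, Function.surjInv_eq])
  have hw' : StrictMono w' := fun p p' hpp' =>
    (h _ _).1 (by simpa only [Function.comp_apply, Function.surjInv_eq] using hw hpp')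
  rw [hu']
  exact Formula.realize_relabel.symm.trans
    ((ha l w w' hw hw' (φ.relabel (Prod.map π id))).trans Formula.realize_relabel)

section DefinableEquivalence

variable {M : Type w} [L.Structure M] {V X X' : Type*}

def classOf (E : L.Formula (V ⊕ V)) (y : V → M) : Set (V → M) :=
  {y' | E.Realize (Sum.elim y y')}

def IsEquivalenceFormula (E : L.Formula (V ⊕ V)) (M : Type w) [L.Structure M] : Prop :=
  Equivalence fun y y' : V → M => E.Realize (Sum.elim y y')

variable {E : L.Formula (V ⊕ V)}

theorem classOf_eq_of_mem (hE : IsEquivalenceFormula E M) {y y' : V → M}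
    (h : y' ∈ classOf E y) : classOf E y' = classOf E y :=
  Set.ext fun _ => ⟨hE.trans h, hE.trans (hE.symm h)⟩

theorem eq_of_image_classOf_eq (hE : IsEquivalenceFormula E M) {S S' : Set (V → M)}
    (hS : ∀ y ∈ S, classOf E y ⊆ S) (hS' : ∀ y ∈ S', classOf E y ⊆ S')
    (h : classOf E '' S = classOf E '' S') : S = S' := by
  have key : ∀ {S S' : Set (V → M)}, (∀ y ∈ S', classOf E y ⊆ S') →
      classOf E '' S ⊆ classOf E '' S' → S ⊆ S' := by
    intro S S' hS' h y hy
    obtain ⟨y', hy', hyy'⟩ := h ⟨y, hy, rfl⟩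
    exact hS' y' hy' (hyy' ▸ hE.refl y)
  exact (key hS' h.le).antisymm (key hS h.ge)

theorem finite_image_classOf_iff (hE : IsEquivalenceFormula E M) {S : Set (V → M)} :
    (classOf E '' S).Finite ↔
      ∃ N, ¬∃ y : Fin N → V → M, Pairwise (fun s t => y t ∉ classOf E (y s)) ∧ ∀ s, y s ∈ S := by
  constructor
  · intro hfin
    have := hfin.to_subtype
    refine ⟨Nat.card (classOf E '' S) + 1, fun ⟨y, hy, hyS⟩ => ?_⟩
    have hinj : Function.Injective fun s => (⟨classOf E (y s), y s, hyS s, rfl⟩ : classOf E '' S) :=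
      fun s t hst => by_contra fun hne => hy hne <| by
        rw [show classOf E (y s) = classOf E (y t) from congrArg Subtype.val hst]
        exact hE.refl (y t)
    have := Nat.card_le_card_of_injective _ hinj
    rw [Nat.card_fin] at this
    exact Nat.not_succ_le_self _ this
  · rintro ⟨N, hN⟩
    by_contra hinf
    let f := Set.Infinite.natEmbedding _ hinf
    choose y hyS hy using fun s : Fin N => (f s).2
    refine hN ⟨y, fun s t hst hts => hst ?_, hyS⟩
    have := (classOf_eq_of_mem hE hts).symm
    rw [hy, hy] at this
    exact Fin.val_injective (f.injective (Subtype.ext this))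

theorem instSet_relabel_sumMap (φ : L.Formula (V ⊕ X)) (g : X → X') (p : X' → M) :
    instSet (φ.relabel (Sum.map id g)) p = instSet φ (p ∘ g) := by
  ext y
  simp only [instSet, Set.mem_ofPred_eq, Formula.realize_relabel, Sum.elim_comp_map,
    Function.comp_id]

variable [Finite V] (E)

noncomputable def allEquiv (φ : L.Formula (V ⊕ X)) : L.Formula (V ⊕ X) :=
  Formula.iAlls V ((E.relabel (Sum.elim (Sum.inl ∘ Sum.inl) Sum.inr)).imp
    (φ.relabel (Sum.elim Sum.inr (Sum.inl ∘ Sum.inr))))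

theorem mem_instSet_allEquiv {φ : L.Formula (V ⊕ X)} {p : X → M} {y : V → M} :
    y ∈ instSet (allEquiv E φ) p ↔ classOf E y ⊆ instSet φ p := by
  simp only [instSet, allEquiv, Set.mem_ofPred_eq, Formula.realize_iAlls, Formula.realize_imp,
    Formula.realize_relabel, Sum.comp_elim, Sum.elim_comp_inr]
  rfl

noncomputable def atLeastClasses (φ : L.Formula (V ⊕ X)) (N : ℕ) : L.Formula X :=
  Formula.iExs (Fin N × V)
    (Formula.iInf (fun st : {st : Fin N × Fin N // st.1 ≠ st.2} =>
        (E.relabel (Sum.elim (fun v => Sum.inr (st.1.1, v)) fun v => Sum.inr (st.1.2, v))).not) ⊓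
      Formula.iInf fun s => φ.relabel (Sum.elim (fun v => Sum.inr (s, v)) Sum.inl))

theorem realize_atLeastClasses {φ : L.Formula (V ⊕ X)} {N : ℕ} {p : X → M} :
    (atLeastClasses E φ N).Realize p ↔
      ∃ y : Fin N → V → M, Pairwise (fun s t => y t ∉ classOf E (y s)) ∧
        ∀ s, y s ∈ instSet φ p := by
  simp only [atLeastClasses, Formula.realize_iExs, Formula.realize_inf, Formula.realize_iInf,
    Formula.realize_not, Formula.realize_relabel, Sum.comp_elim, Sum.elim_comp_inl]
  exact ⟨fun ⟨y, hy, hφ⟩ => ⟨Function.curry y, fun s t hst => hy ⟨(s, t), hst⟩, hφ⟩,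
    fun ⟨y, hy, hφ⟩ => ⟨Function.uncurry y, fun st => hy st.2, hφ⟩⟩

variable {E}

theorem instSet_allEquiv_subset (hE : IsEquivalenceFormula E M) (φ : L.Formula (V ⊕ X))
    (p : X → M) : instSet (allEquiv E φ) p ⊆ instSet φ p :=
  fun y hy => (mem_instSet_allEquiv E).1 hy (hE.refl y)

theorem classOf_subset_instSet_allEquiv (hE : IsEquivalenceFormula E M)
    {φ : L.Formula (V ⊕ X)} {p : X → M} {y : V → M} (hy : y ∈ instSet (allEquiv E φ) p) :
    classOf E y ⊆ instSet (allEquiv E φ) p :=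
  fun _ hy' => (mem_instSet_allEquiv E).2 (classOf_eq_of_mem hE hy' ▸ (mem_instSet_allEquiv E).1 hy)

end DefinableEquivalence

section Stabilization

variable {M : Type w} [L.Structure M] {V : Type*} [Finite V] {E : L.Formula (V ⊕ V)}
  {I : Type*} [LinearOrder I] {γ : Type*} {a : I → γ → M} {K₀ K₁ : Type*} [Finite K₀] [Finite K₁]
  {θ : L.Formula (V ⊕ (K₀ × γ))} {w : K₀ → I}

theorem IsIndiscernible.finite_image_classOf (ha : IsIndiscernible (L := L) a)
    (hE : IsEquivalenceFormula E M) {u u' : K₀ → I} (h : SameOrderType u u')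
    (hfin : (classOf E '' instSet θ (Function.uncurry (a ∘ u))).Finite) :
    (classOf E '' instSet θ (Function.uncurry (a ∘ u'))).Finite := by
  rw [finite_image_classOf_iff hE] at hfin ⊢
  obtain ⟨N, hN⟩ := hfin
  refine ⟨N, ?_⟩
  rwa [← realize_atLeastClasses, ← ha.realize_iff_of_sameOrderType h, realize_atLeastClasses]

theorem IsIndiscernible.mem_instSet_allEquiv_iff_of_chain (ha : IsIndiscernible (L := L) a)
    (hE : IsEquivalenceFormula E M)
    (hfin : (classOf E '' instSet θ (Function.uncurry (a ∘ w))).Finite)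
    (ψ : L.Formula (V ⊕ (K₁ × γ))) (ch : ℕ → K₁ → I) {d d' : K₁ → I}
    (hconf : ∀ s t, s < t → SameOrderType (Sum.elim w (Sum.elim (ch s) (ch t)))
      (Sum.elim w (Sum.elim d d'))) :
    ∀ y ∈ instSet (allEquiv E θ) (Function.uncurry (a ∘ w)),
      (y ∈ instSet (allEquiv E ψ) (Function.uncurry (a ∘ d)) ↔
        y ∈ instSet (allEquiv E ψ) (Function.uncurry (a ∘ d'))) := by
  set W := instSet (allEquiv E θ) (Function.uncurry (a ∘ w))
  set A : (K₁ → I) → Set (V → M) := fun c => instSet (allEquiv E ψ) (Function.uncurry (a ∘ c))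
  let Φ : L.Formula ((K₀ ⊕ (K₁ ⊕ K₁)) × γ) := Formula.iAlls V
    (((allEquiv E θ).relabel (Sum.elim Sum.inr (Sum.inl ∘ Prod.map Sum.inl id))).imp
      (((allEquiv E ψ).relabel (Sum.elim Sum.inr (Sum.inl ∘ Prod.map (Sum.inr ∘ Sum.inl) id))).iff
        ((allEquiv E ψ).relabel (Sum.elim Sum.inr (Sum.inl ∘ Prod.map (Sum.inr ∘ Sum.inr) id)))))
  have hΦ : ∀ c c', Φ.Realize (Function.uncurry (a ∘ Sum.elim w (Sum.elim c c'))) ↔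
      ∀ y ∈ W, (y ∈ A c ↔ y ∈ A c') := by
    intro c c'
    simp only [Φ, Formula.realize_iAlls, Formula.realize_imp, Formula.realize_iff,
      Formula.realize_relabel, Sum.comp_elim, Sum.elim_comp_inr]
    rfl
  have hsat : ∀ c, ∀ y ∈ W ∩ A c, classOf E y ⊆ W ∩ A c := fun c y hy =>
    Set.subset_inter (classOf_subset_instSet_allEquiv hE hy.1)
      (classOf_subset_instSet_allEquiv hE hy.2)
  obtain ⟨s, -, t, -, hst, heq⟩ := Set.infinite_univ.exists_ne_map_eq_of_mapsTo
    (f := fun t => classOf E '' (W ∩ A (ch t))) (fun t _ => Set.image_mono Set.inter_subset_left)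
    (hfin.subset (Set.image_mono (instSet_allEquiv_subset hE θ _))).powerset
  have hagree : ∀ s t, s < t → W ∩ A (ch s) = W ∩ A (ch t) →
      ∀ y ∈ W, (y ∈ A d ↔ y ∈ A d') := fun s t hst h =>
    (hΦ d d').1 <| (ha.realize_iff_of_sameOrderType (hconf s t hst) Φ).1 <|
      (hΦ _ _).2 fun y hy => by simpa [hy] using Set.ext_iff.1 h y
  rcases hst.lt_or_gt with h | h
  · exact hagree s t h (eq_of_image_classOf_eq hE (hsat _) (hsat _) heq)
  · exact hagree t s h (eq_of_image_classOf_eq hE (hsat _) (hsat _) heq.symm)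

variable [Nonempty I]

theorem IsIndiscernible.mem_instSet_allEquiv_iff_of_lt [NoMaxOrder I]
    (ha : IsIndiscernible (L := L) a) (hE : IsEquivalenceFormula E M)
    (hfin : (classOf E '' instSet θ (Function.uncurry (a ∘ w))).Finite)
    (ψ : L.Formula (V ⊕ (K₁ × γ))) {d d' : K₁ → I} (hd : SameOrderType d d')
    (hwd : ∀ k k', w k < d k') (hwd' : ∀ k k', w k < d' k') :
    ∀ y ∈ instSet (allEquiv E θ) (Function.uncurry (a ∘ w)),
      (y ∈ instSet (allEquiv E ψ) (Function.uncurry (a ∘ d)) ↔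
        y ∈ instSet (allEquiv E ψ) (Function.uncurry (a ∘ d'))) := by
  obtain ⟨ch, hch, hv, hchain⟩ := exists_chain_gt d (Sum.elim w (Sum.elim d d'))
  have key : ∀ c, SameOrderType d c → (∀ k k', w k < c k') → (∀ k k', c k < ch 0 k') →
      ∀ y ∈ instSet (allEquiv E θ) (Function.uncurry (a ∘ w)),
        (y ∈ instSet (allEquiv E ψ) (Function.uncurry (a ∘ c)) ↔
          y ∈ instSet (allEquiv E ψ) (Function.uncurry (a ∘ ch 0))) :=
    fun c hc hwc hc0 => ha.mem_instSet_allEquiv_iff_of_chain hE hfin ψ ch fun s t hst =>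
      (SameOrderType.refl w).sumElim_of_lt
        (((hch s).symm.trans hc).sumElim_of_lt ((hch t).symm.trans (hch 0)) (hchain s t hst) hc0)
        (fun k => Sum.forall.2 ⟨fun k' => hv s k' (.inl k), fun k' => hv t k' (.inl k)⟩)
        (fun k => Sum.forall.2 ⟨hwc k, fun k' => hv 0 k' (.inl k)⟩)
  intro y hy
  rw [key d (.refl d) hwd (fun k k' => hv 0 k' (.inr (.inl k))) y hy,
    key d' hd hwd' (fun k k' => hv 0 k' (.inr (.inr k))) y hy]

theorem IsIndiscernible.mem_instSet_allEquiv_iff_of_gt [NoMinOrder I]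
    (ha : IsIndiscernible (L := L) a) (hE : IsEquivalenceFormula E M)
    (hfin : (classOf E '' instSet θ (Function.uncurry (a ∘ w))).Finite)
    (ψ : L.Formula (V ⊕ (K₁ × γ))) {d d' : K₁ → I} (hd : SameOrderType d d')
    (hwd : ∀ k k', d k' < w k) (hwd' : ∀ k k', d' k' < w k) :
    ∀ y ∈ instSet (allEquiv E θ) (Function.uncurry (a ∘ w)),
      (y ∈ instSet (allEquiv E ψ) (Function.uncurry (a ∘ d)) ↔
        y ∈ instSet (allEquiv E ψ) (Function.uncurry (a ∘ d'))) := by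
  obtain ⟨ch, hch, hv, hchain⟩ := exists_chain_lt d (Sum.elim w (Sum.elim d d'))
  have key : ∀ c, SameOrderType d c → (∀ k k', c k' < w k) → (∀ k k', ch 0 k' < c k) →
      ∀ y ∈ instSet (allEquiv E θ) (Function.uncurry (a ∘ w)),
        (y ∈ instSet (allEquiv E ψ) (Function.uncurry (a ∘ c)) ↔
          y ∈ instSet (allEquiv E ψ) (Function.uncurry (a ∘ ch 0))) :=
    fun c hc hwc hc0 => ha.mem_instSet_allEquiv_iff_of_chain hE hfin ψ ch fun s t hst =>
      (SameOrderType.refl w).sumElim_of_gt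
        (((hch s).symm.trans hc).sumElim_of_gt ((hch t).symm.trans (hch 0))
          (fun k k' => hchain s t hst k' k) hc0)
        (fun k => Sum.forall.2 ⟨fun k' => hv s k' (.inl k), fun k' => hv t k' (.inl k)⟩)
        (fun k => Sum.forall.2 ⟨hwc k, fun k' => hv 0 k' (.inl k)⟩)
  intro y hy
  rw [key d (.refl d) hwd (fun k k' => hv 0 k' (.inr (.inl k))) y hy,
    key d' hd hwd' (fun k k' => hv 0 k' (.inr (.inr k))) y hy]

end Stabilization

section Imaginaries

variable {M : Type w} [L.Structure M]

namespace Im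

variable (x : Im L M)

theorem isEquivalenceFormula : IsEquivalenceFormula x.E M :=
  ⟨x.isEqRel.1, x.isEqRel.2.1 _ _, x.isEqRel.2.2 _ _ _⟩

theorem cls_nonempty : x.cls.Nonempty := by
  obtain ⟨b, hb⟩ := x.isCls
  exact ⟨b, hb ▸ x.isEqRel.1 b⟩

variable {x}

theorem cls_eq_classOf {y : Fin x.n → M} (hy : y ∈ x.cls) : x.cls = classOf x.E y := by
  obtain ⟨b, hb⟩ := x.isCls
  rw [hb] at hy ⊢
  exact (classOf_eq_of_mem x.isEquivalenceFormula hy).symm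

theorem cls_subset_instSet_allEquiv {X : Type*} {φ : L.Formula (Fin x.n ⊕ X)} {p : X → M}
    (h : x.cls ⊆ instSet φ p) : x.cls ⊆ instSet (allEquiv x.E φ) p :=
  fun _ hy => (mem_instSet_allEquiv _).2 (cls_eq_classOf hy ▸ h)

end Im

def IsAclWitness (x : Im L M) {X : Type*} (φ : L.Formula (Fin x.n ⊕ X)) (p : X → M) : Prop :=
  x.cls ⊆ instSet φ p ∧ (classOf x.E '' instSet φ p).Finite

variable {x : Im L M}

theorem isAclWitness_relabel_sumMap {X X' : Type*} (φ : L.Formula (Fin x.n ⊕ X)) (g : X → X')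
    (p : X' → M) : IsAclWitness x (φ.relabel (Sum.map id g)) p ↔ IsAclWitness x φ (p ∘ g) := by
  rw [IsAclWitness, IsAclWitness, instSet_relabel_sumMap]

theorem inAclEq_iff {S : Set M} : InAclEq (L := L) S x ↔
    ∃ (m : ℕ) (c : Fin m → M) (φ : L.Formula (Fin x.n ⊕ Fin m)),
      (∀ t, c t ∈ S) ∧ IsAclWitness x φ c := by
  constructor
  · rintro ⟨m, c, φ, hc, hinv, hcls, hfin⟩
    refine ⟨m, c, φ, hc, hcls, hfin.subset ?_⟩
    rintro _ ⟨y, hy, rfl⟩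
    exact ⟨⟨y, rfl⟩, fun y' hy' => (hinv y y' hy').1 hy⟩
  · rintro ⟨m, c, φ, hc, hcls, hfin⟩
    refine ⟨m, c, allEquiv x.E φ, hc, fun y y' hyy' => ?_,
      Im.cls_subset_instSet_allEquiv hcls, hfin.subset ?_⟩
    · change y ∈ instSet _ c ↔ y' ∈ instSet _ c
      rw [mem_instSet_allEquiv, mem_instSet_allEquiv,
        classOf_eq_of_mem x.isEquivalenceFormula hyy']
    · rintro _ ⟨⟨y, rfl⟩, hy⟩
      exact ⟨y, instSet_allEquiv_subset x.isEquivalenceFormula φ c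
        (hy y (x.isEquivalenceFormula.refl y)), rfl⟩

theorem InAclEq.mono {S S' : Set M} (h : InAclEq (L := L) S x) (hSS' : S ⊆ S') :
    InAclEq (L := L) S' x := by
  obtain ⟨m, c, φ, hc, hw⟩ := inAclEq_iff.1 h
  exact inAclEq_iff.2 ⟨m, c, φ, fun t => hSS' (hc t), hw⟩

theorem inAclEq_biUnion_iff {I γ : Type*} {a : I → γ → M} {S : Set I} :
    InAclEq (L := L) (⋃ i ∈ S, Set.range (a i)) x ↔
      ∃ (m : ℕ) (u : Fin m → I) (coord : Fin m → γ) (φ : L.Formula (Fin x.n ⊕ Fin m)),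
        (∀ t, u t ∈ S) ∧ IsAclWitness x φ fun t => a (u t) (coord t) := by
  simp only [inAclEq_iff, Set.mem_iUnion₂, Set.mem_range]
  constructor
  · rintro ⟨m, c, φ, hc, hw⟩
    choose u hu coord hcoord using hc
    obtain rfl : c = fun t => a (u t) (coord t) := funext fun t => (hcoord t).symm
    exact ⟨m, u, coord, φ, hu, hw⟩
  · rintro ⟨m, u, coord, φ, hu, hw⟩
    exact ⟨m, _, φ, fun t => ⟨u t, hu t, coord t, rfl⟩, hw⟩

end Imaginaries

section Tuples

variable {M : Type w} [L.Structure M] {ι : Type*} [Finite ι] {V : ι → Type*}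

noncomputable def sigmaRel (E : ∀ r, L.Formula (V r ⊕ V r)) :
    L.Formula ((Σ r, V r) ⊕ (Σ r, V r)) :=
  Formula.iInf fun r => (E r).relabel (Sum.map (Sigma.mk r) (Sigma.mk r))

variable {E : ∀ r, L.Formula (V r ⊕ V r)}

theorem mem_classOf_sigmaRel {y y' : (Σ r, V r) → M} :
    y' ∈ classOf (sigmaRel E) y ↔ ∀ r, y' ∘ Sigma.mk r ∈ classOf (E r) (y ∘ Sigma.mk r) := by
  simp only [classOf, sigmaRel, Set.mem_ofPred_eq, Formula.realize_iInf, Formula.realize_relabel,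
    Sum.elim_comp_map]

theorem IsEquivalenceFormula.sigmaRel (hE : ∀ r, IsEquivalenceFormula (E r) M) :
    IsEquivalenceFormula (sigmaRel E) M :=
  ⟨fun _ => mem_classOf_sigmaRel.2 fun r => (hE r).refl _,
    fun h => mem_classOf_sigmaRel.2 fun r => (hE r).symm (mem_classOf_sigmaRel.1 h r),
    fun h h' => mem_classOf_sigmaRel.2 fun r =>
      (hE r).trans (mem_classOf_sigmaRel.1 h r) (mem_classOf_sigmaRel.1 h' r)⟩

theorem finite_image_classOf_sigmaRel (S : ∀ r, Set (V r → M))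
    (h : ∀ r, (classOf (E r) '' S r).Finite) :
    (classOf (sigmaRel E) '' {y | ∀ r, y ∘ Sigma.mk r ∈ S r}).Finite := by
  refine ((Set.Finite.pi h).image fun D => {y | ∀ r, y ∘ Sigma.mk r ∈ D r}).subset ?_
  rintro _ ⟨y, hy, rfl⟩
  exact ⟨fun r => classOf (E r) (y ∘ Sigma.mk r), fun r _ => ⟨_, hy r, rfl⟩,
    Set.ext fun _ => mem_classOf_sigmaRel.symm⟩

variable {k : ℕ} {e : Fin k → Im L M} {c : ∀ r, Fin (e r).n → M}

theorem mem_classOf_sigmaRel_iff_isRep (hc : IsRep (L := L) e c) {y : ImVars e → M} :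
    y ∈ classOf (sigmaRel fun r => (e r).E) (fun q => c q.1 q.2) ↔
      IsRep (L := L) e fun r t => y ⟨r, t⟩ := by
  rw [mem_classOf_sigmaRel]
  exact forall_congr' fun r => by rw [(e r).cls_eq_classOf (hc r)]; rfl

theorem mem_instSet_allEquiv_sigmaRel_iff {X : Type*} {ψ : L.Formula (X ⊕ ImVars e)}
    (hψ : ImInvariant (L := L) e ψ) (hc : IsRep (L := L) e c) (p : X → M) :
    (fun q => c q.1 q.2) ∈ instSet (allEquiv (sigmaRel fun r => (e r).E) (ψ.relabel Sum.swap)) p ↔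
      ψ.Realize (Sum.elim p fun q => c q.1 q.2) := by
  have hswap : ∀ y, y ∈ instSet (ψ.relabel Sum.swap) p ↔ ψ.Realize (Sum.elim p y) := fun y => by
    rw [instSet, Set.mem_ofPred_eq, Formula.realize_relabel, Sum.elim_swap]
  rw [mem_instSet_allEquiv, ← hswap]
  exact ⟨fun h => h ((IsEquivalenceFormula.sigmaRel fun r => (e r).isEquivalenceFormula).refl _),
    fun h y hy => (hswap y).2
      ((hψ p c _ hc ((mem_classOf_sigmaRel_iff_isRep hc).1 hy)).1 ((hswap _).1 h))⟩

end Tuples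

theorem IsIndiscernibleOverIm.cls_subset_instSet {M : Type w} [L.Structure M] {I : Type*}
    [LinearOrder I] {γ : Type*} {a : I → γ → M} {x : Im L M}
    (hind : IsIndiscernibleOverIm (L := L) (fun _ : Fin 1 => x) a) {l : ℕ} {w w' : Fin l → I}
    (hw : StrictMono w) (hw' : StrictMono w') {φ : L.Formula (Fin x.n ⊕ (Fin l × γ))}
    (h : x.cls ⊆ instSet φ (Function.uncurry (a ∘ w))) :
    x.cls ⊆ instSet φ (Function.uncurry (a ∘ w')) := by
  obtain ⟨y₀, hy₀⟩ := x.cls_nonempty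
  let Θ : L.Formula ((Fin l × γ) ⊕ ImVars fun _ : Fin 1 => x) :=
    (allEquiv x.E φ).relabel (Sum.elim (fun v => Sum.inr ⟨0, v⟩) Sum.inl)
  have hΘ : ∀ p (c : Fin 1 → Fin x.n → M),
      Θ.Realize (Sum.elim p fun q => c q.1 q.2) ↔ c 0 ∈ instSet (allEquiv x.E φ) p := by
    intro p c
    rw [Formula.realize_relabel, Sum.comp_elim]
    rfl
  have hinv : ImInvariant (L := L) (fun _ : Fin 1 => x) Θ := fun p c c' hc hc' => by
    rw [hΘ, hΘ, mem_instSet_allEquiv, mem_instSet_allEquiv, ← x.cls_eq_classOf (hc 0),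
      ← x.cls_eq_classOf (hc' 0)]
  have := (hΘ _ fun _ => y₀).1 <| (hind l w w' hw hw' Θ hinv (fun _ => y₀) fun _ => hy₀).1 <|
    (hΘ _ fun _ => y₀).2 (Im.cls_subset_instSet_allEquiv h hy₀)
  rw [x.cls_eq_classOf hy₀]
  exact (mem_instSet_allEquiv _).1 this

section Kernel

variable {M : Type w} [L.Structure M] {I : Type*} [LinearOrder I] [Nonempty I] {γ : Type*}
  {a : I → γ → M}

theorem IsIndiscernible.exists_isAclWitness_of_mem_kernel [NoMaxOrder I]
    (ha : IsIndiscernible (L := L) a) {x : Im L M} (hx : x ∈ kernel (L := L) a) :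
    ∃ (m : ℕ) (u : Fin m → I) (φ : L.Formula (Fin x.n ⊕ (Fin m × γ))) (z : I),
      ∀ q : Fin m → I, SameOrderType u q → (∀ t, z < q t) →
        IsAclWitness x φ (Function.uncurry (a ∘ q)) := by
  obtain ⟨I₀, I₁, hcut, h₀, h₁⟩ := hx
  obtain ⟨m₀, u₀, coord₀, φ₀, hu₀, hw₀⟩ := inAclEq_biUnion_iff.1 h₀
  obtain ⟨m₁, u₁, coord₁, φ₁, hu₁, hw₁⟩ := inAclEq_biUnion_iff.1 h₁
  replace hw₀ := (isAclWitness_relabel_sumMap φ₀ (fun t => (t, coord₀ t))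
    (Function.uncurry (a ∘ u₀))).2 hw₀
  replace hw₁ := (isAclWitness_relabel_sumMap φ₁ (fun t => (t, coord₁ t))
    (Function.uncurry (a ∘ u₁))).2 hw₁
  set ψ₁ := φ₁.relabel (Sum.map id fun t => (t, coord₁ t))
  obtain ⟨z, -, hz⟩ := exists_gt_forall_lt u₀ (Classical.arbitrary I)
  refine ⟨m₁, u₁, ψ₁, z, fun q hq hqz =>
    ⟨fun y hy => ?_, ha.finite_image_classOf x.isEquivalenceFormula hq hw₁.2⟩⟩
  have := ha.mem_instSet_allEquiv_iff_of_lt x.isEquivalenceFormula hw₀.2 ψ₁ hq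
    (fun k k' => hcut _ (hu₀ k) _ (hu₁ k')) (fun k k' => (hz k).trans (hqz k')) y
    (Im.cls_subset_instSet_allEquiv hw₀.1 hy)
  exact instSet_allEquiv_subset x.isEquivalenceFormula _ _
    (this.1 (Im.cls_subset_instSet_allEquiv hw₁.1 hy))

theorem IsIndiscernible.isIndiscernibleOverIm [NoMinOrder I] [NoMaxOrder I]
    (ha : IsIndiscernible (L := L) a) {k : ℕ} (e : Fin k → Im L M) {m : Fin k → ℕ}
    {u : ∀ r, Fin (m r) → I} {φ : ∀ r, L.Formula (Fin (e r).n ⊕ (Fin (m r) × γ))} {z : Fin k → I}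
    (hw : ∀ r q, SameOrderType (u r) q → (∀ t, z r < q t) →
      IsAclWitness (e r) (φ r) (Function.uncurry (a ∘ q))) :
    IsIndiscernibleOverIm (L := L) e a := by
  intro n i j hi hj ψ hψ c hc
  obtain ⟨b, -, hb⟩ := exists_gt_forall_lt (Sum.elim z (Sum.elim i j)) (Classical.arbitrary I)
  choose q hq hqb using fun r => exists_sameOrderType_forall_gt (u r) b
  replace hw r := hw r (q r) (hq r) fun t => (hb (.inl r)).trans (hqb r t)
  let θ : L.Formula (ImVars e ⊕ ((Σ r, Fin (m r)) × γ)) :=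
    Formula.iInf fun r => (φ r).relabel (Sum.map (Sigma.mk r) (Prod.map (Sigma.mk r) id))
  have hθ : instSet θ (Function.uncurry (a ∘ fun t => q t.1 t.2)) =
      {y | ∀ r, y ∘ Sigma.mk r ∈ instSet (φ r) (Function.uncurry (a ∘ q r))} := by
    ext y
    simp only [θ, instSet, Set.mem_ofPred_eq, Formula.realize_iInf, Formula.realize_relabel,
      Sum.elim_comp_map]
    rfl
  have key := ha.mem_instSet_allEquiv_iff_of_gt
    (IsEquivalenceFormula.sigmaRel fun r => (e r).isEquivalenceFormula)
    (hθ ▸ finite_image_classOf_sigmaRel _ fun r => (hw r).2) (ψ.relabel Sum.swap)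
    (.of_strictMono hi hj) (fun t s => (hb (.inr (.inl s))).trans (hqb t.1 t.2))
    (fun t s => (hb (.inr (.inr s))).trans (hqb t.1 t.2)) (fun q => c q.1 q.2) ?_
  · rwa [mem_instSet_allEquiv_sigmaRel_iff hψ hc, mem_instSet_allEquiv_sigmaRel_iff hψ hc] at key
  · rw [mem_instSet_allEquiv, hθ]
    exact fun y hy r => (hw r).1 (((mem_classOf_sigmaRel_iff_isRep hc).1 hy) r)

theorem IsIndiscernible.isIndiscernibleOverImSet_kernel [NoMinOrder I] [NoMaxOrder I]
    (ha : IsIndiscernible (L := L) a) :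
    IsIndiscernibleOverImSet (L := L) (kernel (L := L) a) a := fun _ e he => by
  choose m u φ z hw using fun r => ha.exists_isAclWitness_of_mem_kernel (he r)
  exact ha.isIndiscernibleOverIm e hw

theorem IsIndiscernible.mem_kernel [NoMaxOrder I] (ha : IsIndiscernible (L := L) a)
    {x : Im L M} (hx : InAclEq (L := L) (⋃ i, Set.range (a i)) x)
    (hind : IsIndiscernibleOverIm (L := L) (fun _ : Fin 1 => x) a) :
    x ∈ kernel (L := L) a := by
  rw [← Set.biUnion_univ] at hx
  obtain ⟨m, u, coord, φ, -, hφ⟩ := inAclEq_biUnion_iff.1 hx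
  obtain ⟨l, w, π, hw, -, rfl⟩ := exists_strictMono_comp_eq u
  obtain ⟨b, -, hb⟩ := exists_gt_forall_lt w (Classical.arbitrary I)
  obtain ⟨w', hww', hw'b⟩ := exists_sameOrderType_forall_gt w b
  have hw' : StrictMono w' := fun s t hst => (hww' s t).1 (hw hst)
  replace hφ := (isAclWitness_relabel_sumMap φ (fun t => (π t, coord t))
    (Function.uncurry (a ∘ w))).2 hφ
  have hφ' : IsAclWitness x (φ.relabel (Sum.map id fun t => (π t, coord t)))
      (Function.uncurry (a ∘ w')) :=
    ⟨hind.cls_subset_instSet hw hw' hφ.1, ha.finite_image_classOf x.isEquivalenceFormula hww' hφ.2⟩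
  refine ⟨Set.range w, Set.range w', ?_, inAclEq_biUnion_iff.2 ⟨m, w ∘ π, coord, φ, ?_, ?_⟩,
    inAclEq_biUnion_iff.2 ⟨m, w' ∘ π, coord, φ, ?_, ?_⟩⟩
  · rintro _ ⟨s, rfl⟩ _ ⟨t, rfl⟩
    exact (hb s).trans (hw'b t)
  · exact fun t => Set.mem_range_self _
  · exact (isAclWitness_relabel_sumMap φ _ _).1 hφ
  · exact fun t => Set.mem_range_self _
  · exact (isAclWitness_relabel_sumMap φ _ _).1 hφ'

end Kernel

theorem kernel_isGreatest
    (M : Theory.ModelType.{u, v, max u v} T)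
    {I : Type w'} [LinearOrder I] [Nonempty I] [NoMinOrder I] [NoMaxOrder I]
    {γ : Type (max u v)}
    (a : I → γ → M) (ha : IsIndiscernible (L := L) a) :
    IsGreatest
      {K : Set (Im L ↥M) | K ⊆ {x : Im L ↥M | InAclEq (L := L) (⋃ i : I, range (a i)) x} ∧
        IsIndiscernibleOverImSet (L := L) K a}
      (kernel (L := L) a) :=
  ⟨⟨fun _ ⟨_, _, _, h₀, _⟩ => h₀.mono (Set.iUnion₂_subset_iUnion _ _),
      ha.isIndiscernibleOverImSet_kernel⟩,
    fun _ ⟨hacl, hind⟩ x hx => ha.mem_kernel (hacl hx) (hind 1 (fun _ => x) fun _ => hx)⟩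

end Equationality
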